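/- arXiv:math/9905147 — 2 statements merged into one kernel-verified Lean document; each statement's English description precedes it below -/
import Mathlib

section
/- If A ⊆ ℝ × ℝ does not have the Baire property and the set {x ∈ ℝ : (x, f(x)) ∈ A} has the Baire property for every Borel measurable f : ℝ → ℝ, then the indicator function χ_A : ℝ × ℝ → ℝ (equal to 1 on A and 0 off A) is Baire sup-measurable and does not have the Baire property. -/
open scoped symmDiff

/-- A set has the Baire property if it equals the symmetric difference of an
open set and a meager set. -/
def HasBaireProperty {X : Type*} [TopologicalSpace X] (S : Set X) : Prop :=
  ∃ U M : Set X, IsOpen U ∧ IsMeagre M ∧ S = U ∆ M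

/-- A function has the Baire property if the preimage of every open set has
the Baire property. -/
def BaireFunction {X Y : Type*} [TopologicalSpace X] [TopologicalSpace Y] (g : X → Y) : Prop :=
  ∀ U : Set Y, IsOpen U → HasBaireProperty (g ⁻¹' U)

/-- `F : ℝ × ℝ → ℝ` is Baire sup-measurable if for every `f : ℝ → ℝ` with the Baire
property, the function `x ↦ F (x, f x)` has the Baire property. -/
def BaireSupMeasurable (F : ℝ × ℝ → ℝ) : Prop :=
  ∀ f : ℝ → ℝ, BaireFunction f → BaireFunction (fun x => F (x, f x))

/-!
A function `f : ℝ → ℝ` with the Baire property agrees with a Borel function `g` off a meagre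
set: each of the countably many preimages of basic open sets agrees with a Borel set off a
meagre set, so `f` is Borel on a Borel comeagre set avoiding all these exceptions, and we may
take `g` constant off that set. The section of `A` along `f` then differs from the section
along `g` by a meagre set, so it has the Baire property by hypothesis, and `x ↦ χ_A (x, f x)`
is its indicator. On the other hand `χ_A` is not a Baire function, since `χ_A⁻¹' {0}ᶜ = A`.
-/

open Filter MeasureTheory MeasurableSpace Topology

lemma hasBaireProperty_iff_baireMeasurableSet {X : Type*} [TopologicalSpace X] {S : Set X} :
    HasBaireProperty S ↔ BaireMeasurableSet S := by
  constructor
  · rintro ⟨U, M, hU, hM, rfl⟩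
    rw [Set.symmDiff_def]
    exact (hU.baireMeasurableSet.diff hM.baireMeasurableSet).union
      (hM.baireMeasurableSet.diff hU.baireMeasurableSet)
  · intro h
    obtain ⟨U, hU, hSU⟩ := h.residualEq_isOpen
    refine ⟨U, S ∆ U, hU, ?_, by rw [symmDiff_comm, symmDiff_symmDiff_cancel_right]⟩
    filter_upwards [hSU] with x hx
    simp [show (x ∈ S ↔ x ∈ U) from Iff.of_eq hx]

lemma EventuallyMeasurable.exists_measurable_eventuallyEq {α β : Type*} [m : MeasurableSpace α]
    {l : Filter α} [CountableInterFilter l] [l.IsMeasurablyGenerated] [MeasurableSpace β]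
    [CountablyGenerated β] [Nonempty β] {f : α → β} (hf : EventuallyMeasurable m l f) :
    ∃ g : α → β, Measurable g ∧ f =ᶠ[l] g := by
  classical
  have hC := countable_countableGeneratingSet (α := β)
  have hpre : ∀ c ∈ countableGeneratingSet β, EventuallyMeasurableSet m l (f ⁻¹' c) :=
    fun c hc => hf (measurableSet_countableGeneratingSet hc)
  choose! t ht hft using hpre
  have hagree : ∀ᶠ x in l, ∀ c ∈ countableGeneratingSet β, (x ∈ f ⁻¹' c ↔ x ∈ t c) :=
    (eventually_countable_ball hC).2 fun c hc => eventuallyEq_set.1 (hft c hc)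
  obtain ⟨s, hsl, hs, hsagree⟩ := IsMeasurablyGenerated.exists_measurable_subset hagree
  refine ⟨s.piecewise f fun _ => Classical.arbitrary β, ?_, ?_⟩
  · rw [← generateFrom_countableGeneratingSet (α := β)]
    refine measurable_generateFrom fun c hc => ?_
    have hite : s.ite (f ⁻¹' c) ((fun _ => Classical.arbitrary β) ⁻¹' c) =
        s.ite (t c) ((fun _ => Classical.arbitrary β) ⁻¹' c) := by
      ext x
      by_cases hx : x ∈ s
      · simp [Set.ite, hx, hsagree hx c hc]
      · simp [Set.ite, hx]
    rw [Set.piecewise_preimage, hite]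
    exact hs.ite (ht c hc) (measurable_const (measurableSet_countableGeneratingSet hc))
  · filter_upwards [hsl] with x hx
    simp [hx]

instance isMeasurablyGenerated_residual {α : Type*} [TopologicalSpace α] [MeasurableSpace α]
    [OpensMeasurableSpace α] : (residual α).IsMeasurablyGenerated := by
  refine ⟨fun s hs => ?_⟩
  obtain ⟨S, hSo, hSd, hSc, hSs⟩ := mem_residual_iff.1 hs
  refine ⟨⋂₀ S, (countable_sInter_mem hSc).2 fun t ht => ?_, .sInter hSc fun t ht => ?_, hSs⟩
  exacts [residual_of_dense_open (hSo t ht) (hSd t ht), (hSo t ht).measurableSet]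

lemma BaireFunction.exists_measurable_eventuallyEq {α β : Type*} [TopologicalSpace α]
    [MeasurableSpace α] [BorelSpace α] [TopologicalSpace β] [SecondCountableTopology β]
    [MeasurableSpace β] [BorelSpace β] [Nonempty β] {f : α → β} (hf : BaireFunction f) :
    ∃ g : α → β, Measurable g ∧ f =ᶠ[residual α] g := by
  refine EventuallyMeasurable.exists_measurable_eventuallyEq ?_
  rw [BorelSpace.measurable_eq (α := α)]
  exact @measurable_of_isOpen _ _ _ _ _ (eventuallyMeasurableSpace _ _) _ fun U hU =>
    hasBaireProperty_iff_baireMeasurableSet.1 (hf U hU)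

lemma baireFunction_indicator_one_iff {X : Type*} [TopologicalSpace X] {S : Set X} :
    BaireFunction (S.indicator fun _ => (1 : ℝ)) ↔ HasBaireProperty S := by
  constructor
  · classical
    intro h
    have hS := h {0}ᶜ isOpen_compl_singleton
    rw [Set.indicator_const_preimage_eq_union] at hS
    simpa using hS
  · intro hS U _
    rw [hasBaireProperty_iff_baireMeasurableSet] at hS ⊢
    rcases Set.indicator_const_preimage S U (1 : ℝ) with h | h | h | h
    · rw [h]; exact .of_mem_residual univ_mem
    · rw [h]; exact hS
    · rw [h]; exact hS.compl
    · rw [Set.mem_singleton_iff.1 h]; exact IsMeagre.empty.baireMeasurableSet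

theorem stmt_2 (A : Set (ℝ × ℝ)) (hA : ¬ HasBaireProperty A)
    (hsec : ∀ f : ℝ → ℝ, Measurable f → HasBaireProperty {x : ℝ | (x, f x) ∈ A}) :
    BaireSupMeasurable (A.indicator fun _ => (1 : ℝ)) ∧
      ¬ BaireFunction (A.indicator fun _ => (1 : ℝ)) := by
  refine ⟨fun f hf => ?_, fun h => hA (baireFunction_indicator_one_iff.1 h)⟩
  obtain ⟨g, hg, hfg⟩ := hf.exists_measurable_eventuallyEq
  have hsec_g := hasBaireProperty_iff_baireMeasurableSet.1 (hsec g hg)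
  have hsec_f : HasBaireProperty {x : ℝ | (x, f x) ∈ A} := by
    refine hasBaireProperty_iff_baireMeasurableSet.2 (hsec_g.congr ?_)
    filter_upwards [hfg] with x hx
    change ((x, g x) ∈ A) = ((x, f x) ∈ A)
    rw [hx]
  exact baireFunction_indicator_one_iff.2 hsec_f
end

section
/- Let q = (n₀, π₀, g) ∈ Q_h̄, let ξ_0, …, ξ_{m-1} ∈ Γ be distinct indices such that D_{ξ_t} ∩ dom(g) = ∅ for every t < m, and let x_t ∈ D_{ξ_t} be such that (x_t, h_{ξ_t}(x_t)) ∈ q̂ for every t < m. Then p = (n₀, π₀, g ∪ {(x_t, h_{ξ_t}(x_t)) : t < m}) belongs to Q_h̄ and p ≤ q. -/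
/-- Restriction of `x ∈ 2^ω` to its first `n` coordinates. -/
def res (n : ℕ) (x : ℕ → Bool) : Fin n → Bool := fun i => x i

/-- The basic clopen cylinder `[η] = {x ∈ 2^ω : x↾n = η}` determined by `η ∈ 2^n`. -/
def cyl {n : ℕ} (η : Fin n → Bool) : Set (ℕ → Bool) := {x | res n x = η}

/-- A condition `p = (n, π, h)` of the forcing poset `Q_h̄`, where the family
`h̄ = ⟨h_ξ : ξ ∈ Γ⟩` is given by the domains `Dom ξ ⊆ 2^ω` and (total extensions of)
the functions `hbar ξ`.  The finite partial function `h` is represented by its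
graph, a finite set of pairs. -/
structure QCond {Γ : Type*} (Dom : Γ → Set (ℕ → Bool))
    (hbar : Γ → (ℕ → Bool) → (ℕ → Bool)) where
  /-- the natural number `n` -/
  n : ℕ
  /-- the permutation `π` of `2^n` -/
  perm : Equiv.Perm (Fin n → Bool)
  /-- the graph of the finite partial function `h` -/
  graph : Set ((ℕ → Bool) × (ℕ → Bool))
  /-- `h` is a finite partial function -/
  graph_finite : graph.Finite
  /-- `h` is a function (single-valued) -/
  graph_fun : ∀ z ∈ graph, ∀ w ∈ graph, z.1 = w.1 → z = w
  /-- the domain of `h` is contained in `∪_ξ D_ξ` -/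
  dom_sub : ∀ z ∈ graph, ∃ ξ, z.1 ∈ Dom ξ
  /-- `|dom h ∩ D_ξ| ≤ 1` for every `ξ` -/
  dom_once : ∀ ξ, ∀ z ∈ graph, ∀ w ∈ graph, z.1 ∈ Dom ξ → w.1 ∈ Dom ξ → z = w
  /-- if `x ∈ dom h ∩ D_ξ` then `h x = h_ξ x` -/
  val_eq : ∀ z ∈ graph, ∀ ξ, z.1 ∈ Dom ξ → z.2 = hbar ξ z.1
  /-- if `x ∈ dom h` then `(h x)↾n = π (x↾n)` -/
  proj : ∀ z ∈ graph, res n z.2 = perm (res n z.1)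

/-- The order on `Q_h̄`: `q ≤ p` iff `p.n ≤ q.n`, the partial function of `q`
extends that of `p`, and the permutation of `q` projects onto that of `p`. -/
def QLe {Γ : Type*} {Dom : Γ → Set (ℕ → Bool)} {hbar : Γ → (ℕ → Bool) → (ℕ → Bool)}
    (q p : QCond Dom hbar) : Prop :=
  ∃ hn : p.n ≤ q.n, p.graph ⊆ q.graph ∧
    ∀ η : Fin q.n → Bool,
      (fun i : Fin p.n => q.perm η (Fin.castLE hn i)) =
        p.perm (fun i : Fin p.n => η (Fin.castLE hn i))

/-- `p̂ = ∪_{η ∈ 2^n} [η] × [π η] ⊆ 2^ω × 2^ω`. -/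
def Qhat {Γ : Type*} {Dom : Γ → Set (ℕ → Bool)} {hbar : Γ → (ℕ → Bool) → (ℕ → Bool)}
    (p : QCond Dom hbar) : Set ((ℕ → Bool) × (ℕ → Bool)) :=
  ⋃ η : Fin p.n → Bool, cyl η ×ˢ cyl (p.perm η)


/-! Adding the points `(x_t, h_{ξ_t}(x_t))` keeps the permutation, so the only thing to check is
that the enlarged graph still meets every `D_ξ` at most once. A new point meets only `D_{ξ_t}`
(the `D_ξ` are disjoint), which the old graph avoids and no other new point meets
(the `ξ_t` are distinct). The projection condition for the new points is exactly
`(x_t, h_{ξ_t}(x_t)) ∈ q̂`. -/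

theorem index_eq_of_mem_of_pairwise_disjoint {ι α : Type*} {D : ι → Set α}
    (hD : Pairwise fun i j => Disjoint (D i) (D j)) ⦃i j : ι⦄ ⦃y : α⦄
    (hi : y ∈ D i) (hj : y ∈ D j) : i = j :=
  of_not_not fun hne => Set.disjoint_left.mp (hD hne) hi hj

namespace QCond

variable {Γ : Type*} {Dom : Γ → Set (ℕ → Bool)} {hbar : Γ → (ℕ → Bool) → (ℕ → Bool)}

theorem mem_Qhat_iff (p : QCond Dom hbar) (a b : ℕ → Bool) :
    (a, b) ∈ Qhat p ↔ res p.n b = p.perm (res p.n a) := by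
  simp only [Qhat, cyl, Set.mem_iUnion, Set.mem_prod, Set.mem_ofPred_eq]
  exact ⟨fun ⟨_, ha, hb⟩ => ha ▸ hb, fun hb => ⟨_, rfl, hb⟩⟩

section AddPoints

variable (q : QCond Dom hbar) {m : ℕ} (ξ : Fin m → Γ) (x : Fin m → ℕ → Bool)

def addPointsGraph : Set ((ℕ → Bool) × (ℕ → Bool)) :=
  q.graph ∪ Set.range fun t => (x t, hbar (ξ t) (x t))

variable {q ξ x}

theorem addPointsGraph_dom_once (hdisjD : Pairwise fun ξ η => Disjoint (Dom ξ) (Dom η))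
    (hξ : Function.Injective ξ) (hdom : ∀ t, ∀ z ∈ q.graph, z.1 ∉ Dom (ξ t))
    (hx : ∀ t, x t ∈ Dom (ξ t)) (ξ₀ : Γ) :
    ∀ z ∈ q.addPointsGraph ξ x, ∀ w ∈ q.addPointsGraph ξ x,
      z.1 ∈ Dom ξ₀ → w.1 ∈ Dom ξ₀ → z = w := by
  have index_eq := index_eq_of_mem_of_pairwise_disjoint hdisjD
  rintro z (hz | ⟨t, rfl⟩) w (hw | ⟨s, rfl⟩) hz₀ hw₀
  · exact q.dom_once ξ₀ z hz w hw hz₀ hw₀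
  · exact absurd (index_eq (hx s) hw₀ ▸ hz₀) (hdom s z hz)
  · exact absurd (index_eq (hx t) hz₀ ▸ hw₀) (hdom t w hw)
  · obtain rfl : t = s := hξ ((index_eq (hx t) hz₀).trans (index_eq (hx s) hw₀).symm)
    rfl

theorem addPointsGraph_dom_sub (hx : ∀ t, x t ∈ Dom (ξ t)) :
    ∀ z ∈ q.addPointsGraph ξ x, ∃ ξ₀, z.1 ∈ Dom ξ₀ := by
  rintro z (hz | ⟨t, rfl⟩)
  exacts [q.dom_sub z hz, ⟨ξ t, hx t⟩]

def addPoints (hdisjD : Pairwise fun ξ η => Disjoint (Dom ξ) (Dom η))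
    (hξ : Function.Injective ξ) (hdom : ∀ t, ∀ z ∈ q.graph, z.1 ∉ Dom (ξ t))
    (hx : ∀ t, x t ∈ Dom (ξ t)) (hhat : ∀ t, (x t, hbar (ξ t) (x t)) ∈ Qhat q) :
    QCond Dom hbar where
  n := q.n
  perm := q.perm
  graph := q.addPointsGraph ξ x
  graph_finite := q.graph_finite.union (Set.finite_range _)
  graph_fun z hz w hw h := by
    obtain ⟨ξ₀, hz₀⟩ := addPointsGraph_dom_sub hx z hz
    exact addPointsGraph_dom_once hdisjD hξ hdom hx ξ₀ z hz w hw hz₀ (h ▸ hz₀)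
  dom_sub := addPointsGraph_dom_sub hx
  dom_once := addPointsGraph_dom_once hdisjD hξ hdom hx
  val_eq := by
    rintro z (hz | ⟨t, rfl⟩) ξ₀ hz₀
    · exact q.val_eq z hz ξ₀ hz₀
    · exact congrArg (hbar · (x t)) (index_eq_of_mem_of_pairwise_disjoint hdisjD (hx t) hz₀)
  proj := by
    rintro z (hz | ⟨t, rfl⟩)
    exacts [q.proj z hz, (q.mem_Qhat_iff _ _).mp (hhat t)]

theorem addPoints_le (hdisjD : Pairwise fun ξ η => Disjoint (Dom ξ) (Dom η))
    (hξ : Function.Injective ξ) (hdom : ∀ t, ∀ z ∈ q.graph, z.1 ∉ Dom (ξ t))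
    (hx : ∀ t, x t ∈ Dom (ξ t)) (hhat : ∀ t, (x t, hbar (ξ t) (x t)) ∈ Qhat q) :
    QLe (q.addPoints hdisjD hξ hdom hx hhat) q :=
  ⟨le_rfl, Set.subset_union_left, fun _ => rfl⟩

end AddPoints

end QCond

theorem stmt_17_general {Γ : Type*}
    (Dom : Γ → Set (ℕ → Bool)) (hbar : Γ → (ℕ → Bool) → (ℕ → Bool))
    (hdisjD : Pairwise fun ξ η => Disjoint (Dom ξ) (Dom η))
    (q : QCond Dom hbar) (m : ℕ)
    (ξ : Fin m → Γ) (hξ : Function.Injective ξ)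
    -- `D_{ξ_t} ∩ dom g = ∅` for every `t < m`
    (hdom : ∀ t : Fin m, ∀ z ∈ q.graph, z.1 ∉ Dom (ξ t))
    (x : Fin m → (ℕ → Bool)) (hx : ∀ t : Fin m, x t ∈ Dom (ξ t))
    -- `(x_t, h_{ξ_t}(x_t)) ∈ q̂` for every `t < m`
    (hhat : ∀ t : Fin m, (x t, hbar (ξ t) (x t)) ∈ Qhat q) :
    -- `p = (n₀, π₀, g ∪ {(x_t, h_{ξ_t}(x_t)) : t < m})` belongs to `Q_h̄` and `p ≤ q`
    ∃ p : QCond Dom hbar,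
      p.n = q.n ∧ HEq p.perm q.perm ∧
      p.graph = q.graph ∪ Set.range (fun t : Fin m => (x t, hbar (ξ t) (x t))) ∧
      QLe p q :=
  ⟨q.addPoints hdisjD hξ hdom hx hhat, rfl, HEq.rfl, rfl, q.addPoints_le hdisjD hξ hdom hx hhat⟩

theorem stmt_17 {Γ : Type*}
    (Dom : Γ → Set (ℕ → Bool)) (hbar : Γ → (ℕ → Bool) → (ℕ → Bool))
    (hcount : ∀ ξ, (Dom ξ).Countable)
    (hdisjD : Pairwise fun ξ η => Disjoint (Dom ξ) (Dom η))
    (hdisjR : Pairwise fun ξ η => Disjoint (hbar ξ '' Dom ξ) (hbar η '' Dom η))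
    (q : QCond Dom hbar) (m : ℕ)
    (ξ : Fin m → Γ) (hξ : Function.Injective ξ)
    -- `D_{ξ_t} ∩ dom g = ∅` for every `t < m`
    (hdom : ∀ t : Fin m, ∀ z ∈ q.graph, z.1 ∉ Dom (ξ t))
    (x : Fin m → (ℕ → Bool)) (hx : ∀ t : Fin m, x t ∈ Dom (ξ t))
    -- `(x_t, h_{ξ_t}(x_t)) ∈ q̂` for every `t < m`
    (hhat : ∀ t : Fin m, (x t, hbar (ξ t) (x t)) ∈ Qhat q) :
    -- `p = (n₀, π₀, g ∪ {(x_t, h_{ξ_t}(x_t)) : t < m})` belongs to `Q_h̄` and `p ≤ q`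
    ∃ p : QCond Dom hbar,
      p.n = q.n ∧ HEq p.perm q.perm ∧
      p.graph = q.graph ∪ Set.range (fun t : Fin m => (x t, hbar (ξ t) (x t))) ∧
      QLe p q :=
  stmt_17_general Dom hbar hdisjD q m ξ hξ hdom x hx hhat
end
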